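/- There exists an NWBTS(5;b) for every nonnegative integer b with b ≡ 3, 4, 6 or 7 (mod 10), and there exists an NWBTS(11;b) for every nonnegative integer b with b ≡ 18, 19, 36 or 37 (mod 55). -/

import Mathlib

/-!
For `v ≡ 5 (mod 6)` condition (C1) follows from the associated pair `(λ, ε)` alone, and the
defect graph of a nearly well-balanced system is governed by the pair counts. Adding a
`2-(v,3,d)` design that keeps the system 3-balanced (a disjoint one, or all triples) keeps every
defect while shifting `λ` by `d`. Passing to the complement of the system inside a simple
`2-(v,3,d)` design containing it keeps the defect graph and swaps its two colours
(`λ ↦ d - λ`, `ε ↦ -ε`). Adding all `C(v,3)` triples makes the problem periodic in `b` modulo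
`C(v,3)`.

For `v = 5` the residues `3, 4 (mod 10)` are explicit systems and `7, 6` their complements. For
`v = 11`, systems with `18` and `19` blocks lie inside a cyclic `2-(11,3,3)` design `A` that is
disjoint from a second cyclic one `B`; complementing in `A`, adding `B` and complementing in all
`165` triples produce the twelve residues modulo `165`.
-/

namespace DataPlacement

open Finset

variable {α : Type*} [DecidableEq α]

/-- Number of blocks of the family `F` (with multiplicity) containing `T`. -/
def lamF (F : Multiset (Finset α)) (T : Finset α) : ℕ :=
  Multiset.card (F.filter fun B => T ⊆ B)

/-- Triple system with `b` blocks on a point set `X` of size `v`. -/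
def IsTSOn (X : Finset α) (v b : ℕ) (F : Multiset (Finset α)) : Prop :=
  X.card = v ∧ Multiset.card F = b ∧ ∀ B ∈ F, B.card = 3 ∧ B ⊆ X

/-- `(l, e)` is the pair associated with `(v, b)`:
`3b = l·v(v−1)/2 + e` with `−v/2 < e < v/2`. -/
def AssocPair (v b l : ℕ) (e : ℤ) : Prop :=
  6 * (b : ℤ) = (l : ℤ) * v * ((v : ℤ) - 1) + 2 * e ∧
    -(v : ℤ) < 2 * e ∧ 2 * e < (v : ℤ)

/-- Condition (C1). -/
def CondC1 (v b : ℕ) : Prop :=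
  v % 3 = 2 ∧ ∃ l : ℕ, 0 < l ∧
    ((v % 6 = 5 ∧ (l % 3 = 1 ∨ l % 3 = 2)) ∨
     (v % 6 = 2 ∧ (l % 6 = 2 ∨ l % 6 = 4))) ∧
    (b = l * v * (v - 1) / 6 ∨ b = (l * v * (v - 1) + 5) / 6)

/-- Condition (C2). -/
def CondC2 (v b : ℕ) : Prop :=
  v % 2 = 0 ∧ ∃ l : ℕ, 0 < l ∧ l % 2 = 1 ∧
    (l : ℤ) * v * ((v : ℤ) - 1) - v < 6 * (b : ℤ) ∧
    6 * (b : ℤ) < (l : ℤ) * v * ((v : ℤ) - 1) + v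

/-- Pairs of points of `X` whose block count equals `l + i`. -/
def Dlev (X : Finset α) (F : Multiset (Finset α)) (l : ℕ) (i : ℤ) :
    Finset (Finset α) :=
  (X.powersetCard 2).filter fun p => (lamF F p : ℤ) = (l : ℤ) + i

/-- Every pair of points of `X` lies in `l−1`, `l`, or `l+1` blocks. -/
def PairRangeOn (X : Finset α) (F : Multiset (Finset α)) (l : ℕ) : Prop :=
  ∀ p ∈ X.powersetCard 2,
    (l : ℤ) - 1 ≤ (lamF F p : ℤ) ∧ (lamF F p : ℤ) ≤ (l : ℤ) + 1

def IsTriangle (D : Finset (Finset α)) : Prop :=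
  ∃ x y z : α, x ≠ y ∧ x ≠ z ∧ y ≠ z ∧
    D = {({x, y} : Finset α), {y, z}, {x, z}}

def IsFourCycle (D : Finset (Finset α)) : Prop :=
  ∃ x y z w : α, x ≠ y ∧ x ≠ z ∧ x ≠ w ∧ y ≠ z ∧ y ≠ w ∧ z ≠ w ∧
    D = {({x, y} : Finset α), {y, z}, {z, w}, {x, w}}

/-- `D` is a perfect matching on the point set `X`. -/
def IsPerfectMatchingOn (X : Finset α) (D : Finset (Finset α)) : Prop :=
  (∀ p ∈ D, p.card = 2 ∧ p ⊆ X) ∧ ∀ x ∈ X, ∃! p, p ∈ D ∧ x ∈ p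

/-- Defect-graph shape required for nearly 2-balance under (C1). -/
def C1ShapeOn (X : Finset α) (F : Multiset (Finset α)) (l : ℕ) (e : ℤ) : Prop :=
  (e = 1 ∧ IsTriangle (Dlev X F l 1 ∪ Dlev X F l (-1)) ∧
     (Dlev X F l 1).card = 2 ∧ (Dlev X F l (-1)).card = 1) ∨
  (e = -1 ∧ IsTriangle (Dlev X F l 1 ∪ Dlev X F l (-1)) ∧
     (Dlev X F l 1).card = 1 ∧ (Dlev X F l (-1)).card = 2) ∨
  (e = 2 ∧ IsFourCycle (Dlev X F l 1 ∪ Dlev X F l (-1)) ∧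
     (Dlev X F l 1).card = 3 ∧ (Dlev X F l (-1)).card = 1) ∨
  (e = -2 ∧ IsFourCycle (Dlev X F l 1 ∪ Dlev X F l (-1)) ∧
     (Dlev X F l 1).card = 1 ∧ (Dlev X F l (-1)).card = 3)

/-- Defect-graph shape required for nearly 2-balance under (C2)
(here `v = X.card`). -/
def C2ShapeOn (X : Finset α) (v : ℕ) (F : Multiset (Finset α)) (l : ℕ) (e : ℤ) : Prop :=
  (((v : ℤ) - 2 * e) % 4 = 0 ∧
    IsPerfectMatchingOn X (Dlev X F l 1 ∪ Dlev X F l (-1)) ∧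
    4 * ((Dlev X F l 1).card : ℤ) = (v : ℤ) + 2 * e ∧
    4 * ((Dlev X F l (-1)).card : ℤ) = (v : ℤ) - 2 * e) ∨
  (((v : ℤ) - 2 * e) % 4 ≠ 0 ∧
    ∃ (c a₂ a₃ a₄ : α) (star : Finset (Finset α)),
      c ∈ X ∧ a₂ ∈ X ∧ a₃ ∈ X ∧ a₄ ∈ X ∧
      c ≠ a₂ ∧ c ≠ a₃ ∧ c ≠ a₄ ∧ a₂ ≠ a₃ ∧ a₂ ≠ a₄ ∧ a₃ ≠ a₄ ∧
      star = {({c, a₂} : Finset α), {c, a₃}, {c, a₄}} ∧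
      star ⊆ Dlev X F l 1 ∪ Dlev X F l (-1) ∧
      IsPerfectMatchingOn (X \ {c, a₂, a₃, a₄})
        ((Dlev X F l 1 ∪ Dlev X F l (-1)) \ star) ∧
      (((star ∩ Dlev X F l 1).card = 2 ∧ (star ∩ Dlev X F l (-1)).card = 1 ∧
          4 * (((Dlev X F l 1) \ star).card : ℤ) = (v : ℤ) - 6 + 2 * e ∧
          4 * (((Dlev X F l (-1)) \ star).card : ℤ) = (v : ℤ) - 2 - 2 * e) ∨
        ((star ∩ Dlev X F l 1).card = 1 ∧ (star ∩ Dlev X F l (-1)).card = 2 ∧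
          4 * (((Dlev X F l 1) \ star).card : ℤ) = (v : ℤ) - 2 + 2 * e ∧
          4 * (((Dlev X F l (-1)) \ star).card : ℤ) = (v : ℤ) - 6 - 2 * e)))

/-- `F` is 3-balanced on `X`: the multiplicities of any two triples of `X`
differ by at most one. -/
def ThreeBalancedOn (X : Finset α) (F : Multiset (Finset α)) : Prop :=
  ∀ T₁ ∈ X.powersetCard 3, ∀ T₂ ∈ X.powersetCard 3, F.count T₁ ≤ F.count T₂ + 1

/-- Nearly well-balanced triple system NWBTS(v;b) on the point set `X`. -/
def IsNWBTSOn (X : Finset α) (v b : ℕ) (F : Multiset (Finset α)) : Prop :=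
  IsTSOn X v b F ∧ ThreeBalancedOn X F ∧
  ∃ (l : ℕ) (e : ℤ), 0 < l ∧ AssocPair v b l e ∧ PairRangeOn X F l ∧
    ((CondC1 v b ∧ C1ShapeOn X F l e) ∨ (CondC2 v b ∧ C2ShapeOn X v F l e))

/-- `B` is an S_mu(2,3,·) design on the point set `X`. -/
def IsSDesignOn (X : Finset α) (mu : ℕ) (B : Multiset (Finset α)) : Prop :=
  (∀ A ∈ B, A.card = 3 ∧ A ⊆ X) ∧ ∀ p ∈ X.powersetCard 2, lamF B p = mu

/-- `B` is a GDD_mu(2,3,·) of type `1^{·}u^1` on `X` with long group `U`. -/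
def IsGDD1u (X : Finset α) (mu u : ℕ) (U : Finset α) (B : Multiset (Finset α)) : Prop :=
  U ⊆ X ∧ U.card = u ∧
  (∀ A ∈ B, A.card = 3 ∧ A ⊆ X ∧ (A ∩ U).card ≤ 1) ∧
  ∀ p ∈ X.powersetCard 2, ¬ p ⊆ U → lamF B p = mu

/-- `B` is a GDD_mu(2,3,·) with group family `G`. -/
def IsGDDgroups (mu : ℕ) {n : ℕ} (G : Fin n → Finset α) (B : Multiset (Finset α)) : Prop :=
  (∀ A ∈ B, A.card = 3 ∧ A ⊆ Finset.univ.biUnion G ∧ ∀ i, (A ∩ G i).card ≤ 1) ∧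
  ∀ x y : α, x ≠ y → (∃ i j, i ≠ j ∧ x ∈ G i ∧ y ∈ G j) → lamF B {x, y} = mu

/-- Nearly group divisible design NGDD(2,3,·) of type `2^{(m,n)}u^1` on `X`. -/
def IsNGDD (X : Finset α) (m n u : ℕ) (G : Fin (m + n) → Finset α) (U : Finset α)
    (B : Multiset (Finset α)) : Prop :=
  (∀ i, (G i).card = 2 ∧ G i ⊆ X) ∧ U.card = u ∧ U ⊆ X ∧
  (∀ i j, i ≠ j → Disjoint (G i) (G j)) ∧ (∀ i, Disjoint (G i) U) ∧
  U ∪ Finset.univ.biUnion G = X ∧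
  (∀ A ∈ B, A.card = 3 ∧ A ⊆ X) ∧
  (∀ i : Fin (m + n), (i : ℕ) < m → lamF B (G i) = 2) ∧
  (∀ i : Fin (m + n), m ≤ (i : ℕ) → lamF B (G i) = 0) ∧
  (∀ p ∈ U.powersetCard 2, lamF B p = 0) ∧
  (∀ p ∈ X.powersetCard 2, (∀ i, ¬ p ⊆ G i) → ¬ p ⊆ U → lamF B p = 1)

/-- Candelabra system CS(g^n : s) on `X` with stem `S` and groups `G`. -/
def IsCS (X : Finset α) (g n s : ℕ) (S : Finset α) (G : Fin n → Finset α)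
    (A : Multiset (Finset α)) : Prop :=
  S.card = s ∧ S ⊆ X ∧ (∀ i, (G i).card = g ∧ G i ⊆ X) ∧
  (∀ i j, i ≠ j → Disjoint (G i) (G j)) ∧ (∀ i, Disjoint (G i) S) ∧
  S ∪ Finset.univ.biUnion G = X ∧
  (∀ B ∈ A, B.card = 3 ∧ B ⊆ X) ∧
  (∀ T ∈ X.powersetCard 3, (∀ i, ¬ T ⊆ S ∪ G i) → lamF A T = 1) ∧
  (∀ T ∈ X.powersetCard 3, (∃ i, T ⊆ S ∪ G i) → lamF A T = 0)

/-- Partitionable candelabra system PCS(g^n : s). -/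
def IsPCS (X : Finset α) (g n s : ℕ) (S : Finset α) (G : Fin n → Finset α)
    (A : Multiset (Finset α)) : Prop :=
  IsCS X g n s S G A ∧
  ∃ (Ax : α → Multiset (Finset α)) (Ai : Fin (s - 2) → Multiset (Finset α)),
    A = (∑ p ∈ X \ S, Ax p) + ∑ i, Ai i ∧
    (∀ i : Fin n, ∀ p ∈ G i, IsGDD1u X 1 (g + s) (G i ∪ S) (Ax p)) ∧
    (∀ j, IsGDDgroups 1 G (Ai j))

/-- g-PCS_2((2ag)^n : s). -/
def IsGPCS2 (X : Finset α) (a g n s : ℕ) (S : Finset α) (G : Fin n → Finset α)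
    (A : Multiset (Finset α)) : Prop :=
  IsCS X (2 * a * g) n s S G A ∧
  ∃ (P : Fin (g * n) → Multiset (Finset α)) (grp : Fin (g * n) → Fin n),
    (∑ i, P i) ≤ A ∧
    (∀ j : Fin n, (Finset.univ.filter fun i => grp i = j).card = g) ∧
    (∀ i, IsGDD1u X 2 (2 * a * g + s) (G (grp i) ∪ S) (P i))

/-- g-PCS_2^r((2ag)^n : s). -/
def IsGPCS2r (X : Finset α) (a g n s r : ℕ) (S : Finset α) (G : Fin n → Finset α)
    (A : Multiset (Finset α)) : Prop :=
  IsCS X (2 * a * g) n s S G A ∧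
  ∃ (P : Fin (g * n) → Multiset (Finset α)) (grp : Fin (g * n) → Fin n),
    (∑ i, P i) ≤ A ∧
    (∀ j : Fin n, (Finset.univ.filter fun i => grp i = j).card = g) ∧
    (∀ i, IsGDD1u X 2 (2 * a * g + s) (G (grp i) ∪ S) (P i)) ∧
    ∃ (i : Fin (g * n)) (N : Multiset (Finset α))
      (Gs : Fin (r + (a * g * (n - 1) - r)) → Finset α),
      N ≤ P i ∧ IsNGDD X r (a * g * (n - 1) - r) (2 * a * g + s) Gs (G (grp i) ∪ S) N

/-- GDD(3,3,·) of type `g^k` on `X` with groups `H`. -/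
def IsGDD3On (X : Finset α) (g : ℕ) {k : ℕ} (H : Fin k → Finset α)
    (A : Multiset (Finset α)) : Prop :=
  (∀ i, (H i).card = g ∧ H i ⊆ X) ∧ (∀ i j, i ≠ j → Disjoint (H i) (H j)) ∧
  Finset.univ.biUnion H = X ∧
  (∀ B ∈ A, B.card = 3 ∧ B ⊆ X ∧ ∀ i, (B ∩ H i).card ≤ 1) ∧
  (∀ T ∈ X.powersetCard 3, (∀ i, (T ∩ H i).card ≤ 1) → lamF A T = 1)

/-- `B` is a GDD_mu(2,3,·) on the points not in the omitted group `H o`,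
with group set `{H i : i ≠ o}`. -/
def IsGDDOmit (mu : ℕ) {k : ℕ} (H : Fin k → Finset α) (o : Fin k)
    (B : Multiset (Finset α)) : Prop :=
  (∀ A ∈ B, A.card = 3 ∧ Disjoint A (H o) ∧ ∀ i, (A ∩ H i).card ≤ 1) ∧
  ∀ x y : α, x ≠ y →
    (∃ i j, i ≠ j ∧ i ≠ o ∧ j ≠ o ∧ x ∈ H i ∧ y ∈ H j) → lamF B {x, y} = mu

/-- PGDD_2((2g)^{n+1}). -/
def IsPGDD2 (g n : ℕ) (H : Fin (n + 1) → Finset (Fin (2 * g * (n + 1))))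
    (A : Multiset (Finset (Fin (2 * g * (n + 1))))) : Prop :=
  IsGDD3On Finset.univ (2 * g) H A ∧
  ∃ (i0 : Fin (n + 1))
    (P : Fin (g * n + 2 * g) → Multiset (Finset (Fin (2 * g * (n + 1)))))
    (f : Fin (g * n + 2 * g) → Fin (n + 1)),
    A = ∑ i, P i ∧
    (∀ j, j ≠ i0 → (Finset.univ.filter fun i => f i = j).card = g) ∧
    (∀ i, f i ≠ i0 → IsGDDOmit 2 H (f i) (P i)) ∧
    (∀ i, f i = i0 → IsGDDOmit 1 H i0 (P i))

/-- 1-FG(3,(K1,KT),n) of type 1^n. -/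
def Is1FG (n : ℕ) (K1 KT : Set ℕ) (A1 AT : Multiset (Finset (Fin n))) : Prop :=
  (∀ B ∈ A1, B.card ∈ K1) ∧ (∀ B ∈ AT, B.card ∈ KT) ∧
  (∀ p ∈ (Finset.univ : Finset (Fin n)).powersetCard 2, lamF A1 p = 1) ∧
  (∀ T ∈ (Finset.univ : Finset (Fin n)).powersetCard 3, lamF (A1 + AT) T = 1)

/-- PICS_2^r((2g)^3 : 0). -/
def IsPICS2 (g r : ℕ) (G : Fin 3 → Finset (Fin (6 * g)))
    (A : Multiset (Finset (Fin (6 * g)))) : Prop :=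
  IsCS Finset.univ (2 * g) 3 0 (∅ : Finset (Fin (6 * g))) G A ∧
  ∃ P : Fin (4 * g - 2) → Multiset (Finset (Fin (6 * g))),
    A = ∑ i, P i ∧
    (∀ i : Fin (4 * g - 2), (i : ℕ) < 2 * g → IsSDesignOn Finset.univ 2 (P i)) ∧
    (∃ i : Fin (4 * g - 2), (i : ℕ) < 2 * g ∧
      ∃ (N : Multiset (Finset (Fin (6 * g))))
        (Gs : Fin (r + (3 * g - r)) → Finset (Fin (6 * g))),
        N ≤ P i ∧ IsNGDD Finset.univ r (3 * g - r) 0 Gs ∅ N) ∧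
    (∀ i : Fin (4 * g - 2), 2 * g ≤ (i : ℕ) → IsGDDgroups 1 G (P i))

/-- Number of ordered pairs of blocks of `F` whose intersection has exactly
`j` points. -/
def interCount (F : Multiset (Finset α)) (j : ℕ) : ℕ :=
  Multiset.card
    ((F.bind fun A => F.map fun B => (A, B)).filter fun p => (p.1 ∩ p.2).card = j)

/-- The polynomial `P(F, x) = Σ_{j=0}^{3} v_j x^j`. -/
noncomputable def Pval (F : Multiset (Finset α)) (x : ℝ) : ℝ :=
  ∑ j ∈ Finset.range 4, (interCount F j : ℝ) * x ^ j

/-- Optimal data placement for triple replication. -/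
def IsOptimalDP (v b : ℕ) (F : Multiset (Finset (Fin v))) : Prop :=
  IsTSOn Finset.univ v b F ∧
  ∀ F' : Multiset (Finset (Fin v)), IsTSOn Finset.univ v b F' →
    ∀ x : ℝ, 1 ≤ x → Pval F x ≤ Pval F' x

theorem _root_.Finset.forall_mem_powersetCard_two {X : Finset α} {P : Finset α → Prop} :
    (∀ p ∈ X.powersetCard 2, P p) ↔ ∀ x ∈ X, ∀ y ∈ X, x ≠ y → P {x, y} := by
  refine ⟨fun h x hx y hy hxy => h _ ?_, fun h p hp => ?_⟩
  · exact mem_powersetCard.2 ⟨insert_subset hx (singleton_subset_iff.2 hy), card_pair hxy⟩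
  · obtain ⟨hpX, hp2⟩ := mem_powersetCard.1 hp
    obtain ⟨x, y, hxy, rfl⟩ := card_eq_two.1 hp2
    exact h x (hpX (mem_insert_self x _)) y (hpX (mem_insert_of_mem (mem_singleton_self y))) hxy

theorem _root_.Nat.six_mul_choose_three (v : ℕ) : 6 * v.choose 3 = v * (v - 1) * (v - 2) := by
  have h := Nat.descFactorial_eq_factorial_mul_choose v 3
  simp only [Nat.descFactorial_succ, Nat.descFactorial_zero] at h
  rw [show Nat.factorial 3 = 6 from rfl] at h
  rw [← h, Nat.sub_zero]
  ring

section

variable {X : Finset α} {v b d l : ℕ} {e : ℤ} {F G D : Multiset (Finset α)}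

theorem lamF_add (F G : Multiset (Finset α)) (T : Finset α) :
    lamF (F + G) T = lamF F T + lamF G T := by
  simp [lamF, Multiset.filter_add]

theorem lamF_sub (h : G ≤ F) (T : Finset α) : lamF (F - G) T = lamF F T - lamF G T := by
  rw [lamF, lamF, lamF, Multiset.filter_sub, Multiset.card_sub (Multiset.filter_le_filter _ h)]

theorem lamF_mono (h : G ≤ F) (T : Finset α) : lamF G T ≤ lamF F T :=
  Multiset.card_le_card (Multiset.filter_le_filter _ h)

theorem threeBalancedOn_of_nodup (h : F.Nodup) : ThreeBalancedOn X F := fun T₁ _ T₂ _ => by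
  have := Multiset.nodup_iff_count_le_one.1 h T₁
  omega

theorem ThreeBalancedOn.add_powersetCard (h : ThreeBalancedOn X F) :
    ThreeBalancedOn X (F + (X.powersetCard 3).val) := fun T₁ h₁ T₂ h₂ => by
  rw [Multiset.count_add, Multiset.count_add, Multiset.count_eq_one_of_mem (nodup _) h₁,
    Multiset.count_eq_one_of_mem (nodup _) h₂]
  exact Nat.add_le_add_right (h T₁ h₁ T₂ h₂) 1

theorem isSDesignOn_powersetCard (X : Finset α) :
    IsSDesignOn X (#X - 2) (X.powersetCard 3).val := by
  refine ⟨fun B hB => (mem_powersetCard.1 hB).symm, fun p hp => ?_⟩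
  obtain ⟨hpX, hp2⟩ := mem_powersetCard.1 hp
  rw [lamF, ← filter_val, ← card_def, card_filter_powersetCard_subset p X 3 hpX (by omega), hp2]
  simp

theorem Dlev_eq_of_forall {E : Finset (Finset α)} {i : ℤ} (hE : ∀ p ∈ E, p ⊆ X ∧ #p = 2)
    (h : ∀ x ∈ X, ∀ y ∈ X, x ≠ y → ({x, y} ∈ E ↔ (lamF F {x, y} : ℤ) = l + i)) :
    Dlev X F l i = E := by
  have h' := Finset.forall_mem_powersetCard_two
    (P := fun p => p ∈ E ↔ (lamF F p : ℤ) = l + i) |>.2 h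
  ext p
  rw [Dlev, mem_filter]
  exact ⟨fun ⟨hp, hpl⟩ => (h' p hp).2 hpl,
    fun hp => ⟨mem_powersetCard.2 (hE p hp), (h' p (mem_powersetCard.2 (hE p hp))).1 hp⟩⟩

theorem Dlev_eq_of_sub_eq {l' : ℕ}
    (h : ∀ p ∈ X.powersetCard 2, (lamF G p : ℤ) - l' = lamF F p - l) (i : ℤ) :
    Dlev X G l' i = Dlev X F l i :=
  filter_congr fun p hp => by have := h p hp; omega

theorem Dlev_eq_of_sub_eq_neg {l' : ℕ}
    (h : ∀ p ∈ X.powersetCard 2, (lamF G p : ℤ) - l' = l - lamF F p) (i : ℤ) :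
    Dlev X G l' i = Dlev X F l (-i) :=
  filter_congr fun p hp => by have := h p hp; omega

theorem PairRangeOn.of_sub_eq {l' : ℕ} (hF : PairRangeOn X F l)
    (h : ∀ p ∈ X.powersetCard 2, (lamF G p : ℤ) - l' = lamF F p - l) : PairRangeOn X G l' :=
  fun p hp => by have := h p hp; have := hF p hp; omega

theorem PairRangeOn.of_sub_eq_neg {l' : ℕ} (hF : PairRangeOn X F l)
    (h : ∀ p ∈ X.powersetCard 2, (lamF G p : ℤ) - l' = l - lamF F p) : PairRangeOn X G l' :=
  fun p hp => by have := h p hp; have := hF p hp; omega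

theorem C1ShapeOn.e_cases (h : C1ShapeOn X F l e) : e = 1 ∨ e = -1 ∨ e = 2 ∨ e = -2 := by
  rcases h with ⟨rfl, -⟩ | ⟨rfl, -⟩ | ⟨rfl, -⟩ | ⟨rfl, -⟩ <;> simp

theorem C1ShapeOn.nonempty_Dlev_one (h : C1ShapeOn X F l e) : (Dlev X F l 1).Nonempty := by
  rw [← card_pos]
  rcases h with ⟨-, -, h, -⟩ | ⟨-, -, h, -⟩ | ⟨-, -, h, -⟩ | ⟨-, -, h, -⟩ <;> omega

theorem C1ShapeOn.neg {l' : ℕ} (h : ∀ i, Dlev X G l' i = Dlev X F l (-i))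
    (hS : C1ShapeOn X F l e) : C1ShapeOn X G l' (-e) := by
  rw [C1ShapeOn, h, h, neg_neg, union_comm]
  rcases hS with ⟨rfl, hT, h₁, h₂⟩ | ⟨rfl, hT, h₁, h₂⟩ | ⟨rfl, hT, h₁, h₂⟩ | ⟨rfl, hT, h₁, h₂⟩
  · exact Or.inr (Or.inl ⟨rfl, hT, h₂, h₁⟩)
  · exact Or.inl ⟨rfl, hT, h₂, h₁⟩
  · exact Or.inr (Or.inr (Or.inr ⟨rfl, hT, h₂, h₁⟩))
  · exact Or.inr (Or.inr (Or.inl ⟨rfl, hT, h₂, h₁⟩))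

/-- As `v(v-1) ≡ 2 (mod 6)`, the equation `6b = l v(v-1) + 2e` forces `l ≡ -e (mod 3)`. -/
theorem condC1_of_assocPair (hv : v % 6 = 5) (hl : 0 < l) (he : e = 1 ∨ e = -1 ∨ e = 2 ∨ e = -2)
    (h : AssocPair v b l e) : CondC1 v b := by
  have hN : v * (v - 1) % 6 = 2 := by rw [Nat.mul_mod, show (v - 1) % 6 = 4 by omega, hv]
  have hM : l * v * (v - 1) % 6 = l % 6 * 2 % 6 := by rw [mul_assoc, Nat.mul_mod, hN]
  have hcast : ((l * v * (v - 1) : ℕ) : ℤ) = l * v * ((v : ℤ) - 1) := by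
    push_cast [Nat.cast_sub (by omega : 1 ≤ v)]
    ring
  have h6 := h.1
  rw [← hcast] at h6
  refine ⟨by omega, l, hl, ?_⟩
  generalize l * v * (v - 1) = M at hM h6 ⊢
  omega

theorem isNWBTSOn_iff (hv : v % 6 = 5) :
    IsNWBTSOn X v b F ↔ IsTSOn X v b F ∧ ThreeBalancedOn X F ∧
      ∃ l e, 0 < l ∧ AssocPair v b l e ∧ PairRangeOn X F l ∧ C1ShapeOn X F l e := by
  constructor
  · rintro ⟨hTS, hbal, l, e, hl, hA, hR, ⟨-, hS⟩ | ⟨⟨hv2, -⟩, -⟩⟩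
    · exact ⟨hTS, hbal, l, e, hl, hA, hR, hS⟩
    · omega
  · rintro ⟨hTS, hbal, l, e, hl, hA, hR, hS⟩
    exact ⟨hTS, hbal, l, e, hl, hA, hR, Or.inl ⟨condC1_of_assocPair hv hl hS.e_cases hA, hS⟩⟩

theorem IsNWBTSOn.add_design (hv : v % 6 = 5) (hF : IsNWBTSOn X v b F) (hD : IsSDesignOn X d D)
    (hk : 6 * (Multiset.card D : ℤ) = d * v * ((v : ℤ) - 1))
    (hbal : ThreeBalancedOn X (F + D)) :
    IsNWBTSOn X v (b + Multiset.card D) (F + D) := by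
  obtain ⟨⟨hX, hb, hB⟩, -, l, e, hl, ⟨hA, he⟩, hR, hS⟩ := (isNWBTSOn_iff hv).1 hF
  have hsub : ∀ p ∈ X.powersetCard 2, (lamF (F + D) p : ℤ) - ↑(l + d) = lamF F p - l :=
    fun p hp => by rw [lamF_add, hD.2 p hp]; push_cast; ring
  refine (isNWBTSOn_iff hv).2 ⟨⟨hX, by rw [Multiset.card_add, hb], fun B hB' => ?_⟩, hbal,
    l + d, e, by omega, ⟨?_, he⟩, hR.of_sub_eq hsub, ?_⟩
  · rcases Multiset.mem_add.1 hB' with hB' | hB'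
    exacts [hB B hB', hD.1 B hB']
  · push_cast
    linear_combination hA + hk
  · simpa only [C1ShapeOn, Dlev_eq_of_sub_eq hsub] using hS

theorem IsNWBTSOn.design_sub (hv : v % 6 = 5) (hF : IsNWBTSOn X v b F) (hD : IsSDesignOn X d D)
    (hDnd : D.Nodup) (hk : 6 * (Multiset.card D : ℤ) = d * v * ((v : ℤ) - 1)) (hFD : F ≤ D) :
    IsNWBTSOn X v (Multiset.card D - b) (D - F) := by
  obtain ⟨⟨hX, hb, -⟩, -, l, e, hl, ⟨hA, he⟩, hR, hS⟩ := (isNWBTSOn_iff hv).1 hF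
  have hld : l < d := by
    obtain ⟨p, hp⟩ := hS.nonempty_Dlev_one
    obtain ⟨hp2, hpl⟩ := mem_filter.1 hp
    have := lamF_mono hFD p
    rw [hD.2 p hp2] at this
    omega
  have hsub : ∀ p ∈ X.powersetCard 2, (lamF (D - F) p : ℤ) - ↑(d - l) = l - lamF F p :=
    fun p hp => by
      have hle := lamF_mono hFD p
      rw [hD.2 p hp] at hle
      rw [lamF_sub hFD, hD.2 p hp]
      omega
  have hbk : b ≤ Multiset.card D := hb ▸ Multiset.card_le_card hFD
  refine (isNWBTSOn_iff hv).2 ⟨⟨hX, by rw [Multiset.card_sub hFD, hb],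
    fun B hB => hD.1 B (Multiset.mem_of_le (Multiset.sub_le_self _ _) hB)⟩,
    threeBalancedOn_of_nodup (Multiset.nodup_of_le (Multiset.sub_le_self _ _) hDnd),
    d - l, -e, by omega, ⟨?_, by omega, by omega⟩, hR.of_sub_eq_neg hsub,
    hS.neg (Dlev_eq_of_sub_eq_neg hsub)⟩
  push_cast [Nat.cast_sub hbk, Nat.cast_sub hld.le]
  linear_combination hk - hA

omit [DecidableEq α] in
theorem six_mul_card_powersetCard_three (hv : 2 ≤ v) (hX : #X = v) :
    6 * (Multiset.card (X.powersetCard 3).val : ℤ) = ↑(#X - 2) * v * ((v : ℤ) - 1) := by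
  rw [← card_def, card_powersetCard, hX]
  have := Nat.six_mul_choose_three v
  zify [hv, (by omega : 1 ≤ v)] at this ⊢
  linear_combination this

theorem IsNWBTSOn.add_powersetCard (hv : v % 6 = 5) (hF : IsNWBTSOn X v b F) :
    IsNWBTSOn X v (b + v.choose 3) (F + (X.powersetCard 3).val) := by
  have hX : #X = v := hF.1.1
  have h := hF.add_design hv (isSDesignOn_powersetCard X)
    (six_mul_card_powersetCard_three (by omega) hX) hF.2.1.add_powersetCard
  rwa [← card_def, card_powersetCard, hX] at h

theorem IsNWBTSOn.powersetCard_sub (hv : v % 6 = 5) (hF : IsNWBTSOn X v b F) (hnd : F.Nodup) :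
    IsNWBTSOn X v (v.choose 3 - b) ((X.powersetCard 3).val - F) := by
  have hX : #X = v := hF.1.1
  have hFK : F ≤ (X.powersetCard 3).val := (Multiset.le_iff_subset hnd).2 fun B hB =>
    mem_powersetCard.2 (hF.1.2.2 B hB).symm
  have h := hF.design_sub hv (isSDesignOn_powersetCard X) (nodup _)
    (six_mul_card_powersetCard_three (by omega) hX) hFK
  rwa [← card_def, card_powersetCard, hX] at h

theorem exists_isNWBTSOn_of_mod (hv : v % 6 = 5)
    (h : ∃ F, IsNWBTSOn X v (b % v.choose 3) F) : ∃ F, IsNWBTSOn X v b F := by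
  rw [← Nat.mod_add_div b (v.choose 3)]
  induction b / v.choose 3 with
  | zero => simpa using h
  | succ q ih =>
    obtain ⟨F, hF⟩ := ih
    exact ⟨_, by simpa only [Nat.mul_succ, ← add_assoc] using hF.add_powersetCard hv⟩

end

def cyclicDevelop {n : ℕ} (base : List (Finset (Fin n))) : Multiset (Finset (Fin n)) :=
  ↑(base.flatMap fun A => (List.finRange n).map fun t => A.image (· + t))

theorem isSDesignOn_cyclicDevelop {n d : ℕ} [NeZero n] {base : List (Finset (Fin n))}
    (hbase : ∀ A ∈ base, #A = 3)
    (hpairs : ∀ x y : Fin n, x ≠ y → lamF (cyclicDevelop base) {x, y} = d) :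
    IsSDesignOn univ d (cyclicDevelop base) := by
  refine ⟨fun B hB => ⟨?_, subset_univ B⟩,
    Finset.forall_mem_powersetCard_two.2 fun x _ y _ => hpairs x y⟩
  simp only [cyclicDevelop, Multiset.mem_coe, List.mem_flatMap, List.mem_map] at hB
  obtain ⟨A, hA, t, -, rfl⟩ := hB
  rw [card_image_of_injective _ (add_left_injective t), hbase A hA]

/-- The two base families are disjoint difference families over `ℤ/11`: each covers every
nonzero difference exactly three times, so their developments are disjoint `2-(11,3,3)` designs. -/
def design11A : Multiset (Finset (Fin 11)) :=
  cyclicDevelop [{0, 1, 2}, {0, 1, 6}, {0, 2, 4}, {0, 3, 6}, {0, 3, 7}]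

def design11B : Multiset (Finset (Fin 11)) :=
  cyclicDevelop [{0, 1, 3}, {0, 1, 4}, {0, 1, 5}, {0, 2, 5}, {0, 2, 6}]

theorem isSDesignOn_design11A : IsSDesignOn univ 3 design11A :=
  isSDesignOn_cyclicDevelop (by simp) (by decide +kernel)

theorem isSDesignOn_design11B : IsSDesignOn univ 3 design11B :=
  isSDesignOn_cyclicDevelop (by simp) (by decide +kernel)

theorem card_design11A : Multiset.card design11A = 55 := rfl

theorem card_design11B : Multiset.card design11B = 55 := rfl

theorem nodup_design11A_add_design11B : (design11A + design11B).Nodup := by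
  decide +kernel

def system5_3 : Multiset (Finset (Fin 5)) :=
  Multiset.ofList [{0, 1, 2}, {0, 1, 3}, {2, 3, 4}]

def system5_4 : Multiset (Finset (Fin 5)) :=
  Multiset.ofList [{0, 1, 2}, {1, 2, 3}, {2, 3, 4}, {0, 3, 4}]

-- Found by a computer search among the blocks of `design11A`, as is `system11_19`.
def system11_18 : Multiset (Finset (Fin 11)) :=
  Multiset.ofList [{0, 1, 6}, {0, 1, 2}, {1, 4, 7}, {0, 4, 8}, {0, 5, 10}, {0, 7, 9},
    {1, 5, 9}, {1, 8, 10}, {2, 5, 8}, {2, 3, 4}, {2, 7, 10}, {2, 6, 9}, {3, 5, 7}, {3, 6, 10},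
    {3, 8, 9}, {4, 5, 6}, {4, 9, 10}, {6, 7, 8}]

def system11_19 : Multiset (Finset (Fin 11)) :=
  Multiset.ofList [{0, 1, 6}, {0, 1, 2}, {0, 4, 7}, {0, 5, 8}, {0, 9, 10}, {1, 2, 7},
    {2, 3, 8}, {2, 3, 4}, {3, 6, 9}, {2, 6, 10}, {2, 5, 9}, {1, 3, 5}, {1, 4, 9}, {1, 8, 10},
    {3, 7, 10}, {4, 6, 8}, {4, 5, 10}, {5, 6, 7}, {7, 8, 9}]

theorem isNWBTSOn_system5_3 : IsNWBTSOn univ 5 3 system5_3 := by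
  have h₁ : Dlev univ system5_3 1 1 = {{0, 1}} :=
    Dlev_eq_of_forall (by simp) (by decide +kernel)
  have h₂ : Dlev univ system5_3 1 (-1) = {{1, 4}, {0, 4}} :=
    Dlev_eq_of_forall (by simp) (by decide +kernel)
  refine (isNWBTSOn_iff (by norm_num)).2 ⟨⟨card_fin 5, rfl, by simp [system5_3]⟩,
    threeBalancedOn_of_nodup (by decide +kernel), 1, -1, one_pos, by norm_num [AssocPair],
    Finset.forall_mem_powersetCard_two.2 (by decide +kernel),
    Or.inr (Or.inl ⟨rfl, ?_, by rw [h₁]; rfl, by rw [h₂]; rfl⟩)⟩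
  rw [h₁, h₂]
  exact ⟨0, 1, 4, by decide⟩

theorem isNWBTSOn_system5_4 : IsNWBTSOn univ 5 4 system5_4 := by
  have h₁ : Dlev univ system5_4 1 1 = {{1, 2}, {2, 3}, {3, 4}} :=
    Dlev_eq_of_forall (by simp) (by decide +kernel)
  have h₂ : Dlev univ system5_4 1 (-1) = {{1, 4}} :=
    Dlev_eq_of_forall (by simp) (by decide +kernel)
  refine (isNWBTSOn_iff (by norm_num)).2 ⟨⟨card_fin 5, rfl, by simp [system5_4]⟩,
    threeBalancedOn_of_nodup (by decide +kernel), 1, 2, one_pos, by norm_num [AssocPair],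
    Finset.forall_mem_powersetCard_two.2 (by decide +kernel),
    Or.inr (Or.inr (Or.inl ⟨rfl, ?_, by rw [h₁]; rfl, by rw [h₂]; rfl⟩))⟩
  rw [h₁, h₂]
  exact ⟨1, 2, 3, 4, by decide⟩

theorem isNWBTSOn_system11_18 : IsNWBTSOn univ 11 18 system11_18 := by
  have h₁ : Dlev univ system11_18 1 1 = {{0, 1}} :=
    Dlev_eq_of_forall (by simp) (by decide +kernel)
  have h₂ : Dlev univ system11_18 1 (-1) = {{1, 3}, {0, 3}} :=
    Dlev_eq_of_forall (by simp) (by decide +kernel)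
  refine (isNWBTSOn_iff (by norm_num)).2 ⟨⟨card_fin 11, rfl, by simp [system11_18]⟩,
    threeBalancedOn_of_nodup (by decide +kernel), 1, -1, one_pos, by norm_num [AssocPair],
    Finset.forall_mem_powersetCard_two.2 (by decide +kernel),
    Or.inr (Or.inl ⟨rfl, ?_, by rw [h₁]; rfl, by rw [h₂]; rfl⟩)⟩
  rw [h₁, h₂]
  exact ⟨0, 1, 3, by decide⟩

theorem isNWBTSOn_system11_19 : IsNWBTSOn univ 11 19 system11_19 := by
  have h₁ : Dlev univ system11_19 1 1 = {{0, 1}, {1, 2}, {2, 3}} :=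
    Dlev_eq_of_forall (by simp) (by decide +kernel)
  have h₂ : Dlev univ system11_19 1 (-1) = {{0, 3}} :=
    Dlev_eq_of_forall (by simp) (by decide +kernel)
  refine (isNWBTSOn_iff (by norm_num)).2 ⟨⟨card_fin 11, rfl, by simp [system11_19]⟩,
    threeBalancedOn_of_nodup (by decide +kernel), 1, 2, one_pos, by norm_num [AssocPair],
    Finset.forall_mem_powersetCard_two.2 (by decide +kernel),
    Or.inr (Or.inr (Or.inl ⟨rfl, ?_, by rw [h₁]; rfl, by rw [h₂]; rfl⟩))⟩
  rw [h₁, h₂]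
  exact ⟨0, 1, 2, 3, by decide⟩

theorem system11_18_le_design11A : system11_18 ≤ design11A := by
  decide +kernel

theorem system11_19_le_design11A : system11_19 ≤ design11A := by
  decide +kernel

theorem exists_isNWBTSOn_eleven_of_le_design11A {b : ℕ} {F : Multiset (Finset (Fin 11))}
    (hF : IsNWBTSOn (univ : Finset (Fin 11)) 11 b F) (hle : F ≤ design11A) :
    ∀ r ∈ [55 - b, b + 55, 165 - b, 165 - (55 - b), 165 - (b + 55)],
      ∃ G : Multiset (Finset (Fin 11)), IsNWBTSOn univ 11 r G := by
  have hv : 11 % 6 = 5 := rfl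
  have hAnd := Multiset.nodup_of_le (Multiset.le_add_right _ _) nodup_design11A_add_design11B
  have hFB : (F + design11B).Nodup :=
    Multiset.nodup_of_le (add_le_add_left hle _) nodup_design11A_add_design11B
  have hcompl := hF.design_sub hv isSDesignOn_design11A hAnd
    (by rw [card_design11A]; norm_num) hle
  have hplus := hF.add_design hv isSDesignOn_design11B (by rw [card_design11B]; norm_num)
    (threeBalancedOn_of_nodup hFB)
  rw [card_design11A] at hcompl
  rw [card_design11B] at hplus
  simp only [List.mem_cons, List.not_mem_nil, or_false]
  rintro r (rfl | rfl | rfl | rfl | rfl)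
  exacts [⟨_, hcompl⟩, ⟨_, hplus⟩, ⟨_, hF.powersetCard_sub hv (Multiset.nodup_of_le hle hAnd)⟩,
    ⟨_, hcompl.powersetCard_sub hv (Multiset.nodup_of_le (Multiset.sub_le_self _ _) hAnd)⟩,
    ⟨_, hplus.powersetCard_sub hv hFB⟩]

theorem exists_isNWBTSOn_five {b : ℕ} (hb : b % 10 = 3 ∨ b % 10 = 4 ∨ b % 10 = 6 ∨ b % 10 = 7) :
    ∃ F, IsNWBTSOn (univ : Finset (Fin 5)) 5 b F := by
  refine exists_isNWBTSOn_of_mod rfl ?_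
  have h3 := isNWBTSOn_system5_3
  have h4 := isNWBTSOn_system5_4
  rw [show Nat.choose 5 3 = 10 from rfl]
  rcases hb with h | h | h | h <;> rw [h]
  exacts [⟨_, h3⟩, ⟨_, h4⟩, ⟨_, h4.powersetCard_sub rfl (by decide +kernel)⟩,
    ⟨_, h3.powersetCard_sub rfl (by decide +kernel)⟩]

theorem exists_isNWBTSOn_eleven {b : ℕ}
    (hb : b % 55 = 18 ∨ b % 55 = 19 ∨ b % 55 = 36 ∨ b % 55 = 37) :
    ∃ F, IsNWBTSOn (univ : Finset (Fin 11)) 11 b F := by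
  refine exists_isNWBTSOn_of_mod rfl ?_
  have h18 := exists_isNWBTSOn_eleven_of_le_design11A isNWBTSOn_system11_18
    system11_18_le_design11A
  have h19 := exists_isNWBTSOn_eleven_of_le_design11A isNWBTSOn_system11_19
    system11_19_le_design11A
  rw [show Nat.choose 11 3 = 165 from rfl]
  have : b % 165 = 18 ∨ b % 165 = 19 ∨ b % 165 = 36 ∨ b % 165 = 37 ∨ b % 165 = 73 ∨
      b % 165 = 74 ∨ b % 165 = 91 ∨ b % 165 = 92 ∨ b % 165 = 128 ∨ b % 165 = 129 ∨
      b % 165 = 146 ∨ b % 165 = 147 := by omega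
  rcases this with h | h | h | h | h | h | h | h | h | h | h | h <;> rw [h]
  exacts [⟨_, isNWBTSOn_system11_18⟩, ⟨_, isNWBTSOn_system11_19⟩, h19 _ (by decide),
    h18 _ (by decide), h18 _ (by decide), h19 _ (by decide), h19 _ (by decide),
    h18 _ (by decide), h18 _ (by decide), h19 _ (by decide), h19 _ (by decide),
    h18 _ (by decide)]

/-- NWBTS(5;b) and NWBTS(11;b). -/
theorem stmt_12 :
    (∀ b : ℕ, (b % 10 = 3 ∨ b % 10 = 4 ∨ b % 10 = 6 ∨ b % 10 = 7) →
      ∃ F : Multiset (Finset (Fin 5)), IsNWBTSOn Finset.univ 5 b F) ∧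
    (∀ b : ℕ, (b % 55 = 18 ∨ b % 55 = 19 ∨ b % 55 = 36 ∨ b % 55 = 37) →
      ∃ F : Multiset (Finset (Fin 11)), IsNWBTSOn Finset.univ 11 b F) :=
  ⟨fun _ => exists_isNWBTSOn_five, fun _ => exists_isNWBTSOn_eleven⟩

end DataPlacement
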